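/- arXiv:1112.1436 — 2 statements merged into one kernel-verified Lean document; each statement's English description precedes it below -/
import Mathlib

section
/- If the set {(A*y, ⟨b, y⟩) : y ∈ K*} ⊆ X × ℝ is closed, then the conic system P = {x : Ax ≤_K b} is well-behaved. -/
/-
Let `D = {(A* y, r) : y ∈ K*, ⟪b, y⟫ ≤ r}`. It is a convex cone, and it is closed: along a
convergent sequence in `D`, the values `⟪b, y⟫` are squeezed between the weak-duality bound
`⟪A* y, x₀⟫` (for a feasible `x₀`) and the convergent second coordinates, so a subsequence
converges into the closed set `{(A* y, ⟪b, y⟫) : y ∈ K*}`.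
If `v = val(P_c)` is finite, then `(c, v) ∈ D`: a separating functional `(x, t)` would have
`t ≥ 0` and `A x + t b ∈ K** = K`, and the feasible points `(x₀ - s x) / (1 + s t)` would push
`⟪c, ·⟫` above `v` as `s → ∞`. A witness `y` of `(c, v) ∈ D` has `⟪b, y⟫ ≤ v`, and weak duality
gives the reverse inequality.
-/

open scoped RealInnerProductSpace

noncomputable section

/-- The dual cone of a set `K` in a real inner product space. -/
def dualConeSet {Y : Type*} [NormedAddCommGroup Y] [InnerProductSpace ℝ Y] (K : Set Y) : Set Y :=
  {y | ∀ x ∈ K, 0 ≤ ⟪y, x⟫}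

/-- The conic system `P = {x | Ax ≤_K b}` is well-behaved: for every objective `c` for which
the value of `sup {⟪c, x⟫ | b - A x ∈ K}` is finite (i.e. the set of objective values has a
least upper bound `v`), there is `y ∈ K*` with `A* y = c` and `⟪b, y⟫ = v`. -/
def WellBehavedSystem {X Y : Type*}
    [NormedAddCommGroup X] [InnerProductSpace ℝ X] [FiniteDimensional ℝ X]
    [NormedAddCommGroup Y] [InnerProductSpace ℝ Y] [FiniteDimensional ℝ Y]
    (A : X →ₗ[ℝ] Y) (b : Y) (K : Set Y) : Prop :=
  ∀ (c : X) (v : ℝ), IsLUB {r : ℝ | ∃ x : X, b - A x ∈ K ∧ r = ⟪c, x⟫} v →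
    ∃ y ∈ dualConeSet K, LinearMap.adjoint A y = c ∧ ⟪b, y⟫ = v

section Cone

variable {Y : Type*}

def ProperCone.ofIsClosedConvex [AddCommGroup Y] [Module ℝ Y] [TopologicalSpace Y]
    {K : Set Y} (hKclosed : IsClosed K) (hKconv : Convex ℝ K)
    (hKcone : ∀ (t : ℝ), 0 ≤ t → ∀ x ∈ K, t • x ∈ K) (hKne : K.Nonempty) : ProperCone ℝ Y where
  carrier := K
  add_mem' {u w} hu hw := by
    simpa [smul_add, smul_smul] using
      hKcone 2 zero_le_two _ (hKconv hu hw one_half_pos.le one_half_pos.le (add_halves 1))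
  zero_mem' := by simpa using hKcone 0 le_rfl _ hKne.some_mem
  smul_mem' t _ hx := hKcone t t.2 _ hx
  isClosed' := hKclosed

variable [NormedAddCommGroup Y] [InnerProductSpace ℝ Y] [CompleteSpace Y]

theorem dualConeSet_eq_innerDual (K : Set Y) :
    dualConeSet K = (ProperCone.innerDual K : Set Y) := by
  ext y
  simp [dualConeSet, real_inner_comm]

theorem mem_iff_forall_mem_dualConeSet_inner_nonneg (K : ProperCone ℝ Y) {z : Y} :
    z ∈ K ↔ ∀ y ∈ dualConeSet (K : Set Y), 0 ≤ ⟪z, y⟫ := by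
  nth_rw 1 [← K.innerDual_innerDual]
  rw [dualConeSet_eq_innerDual]
  simp only [ProperCone.mem_innerDual, SetLike.mem_coe, real_inner_comm z]

end Cone

section ConicFeasibility

variable {X Y : Type*} [NormedAddCommGroup X] [InnerProductSpace ℝ X]
  [AddCommGroup Y] [Module ℝ Y] [TopologicalSpace Y]

theorem inner_add_mul_nonneg_of_add_smul_mem (A : X →ₗ[ℝ] Y) (b : Y) (K : ProperCone ℝ Y)
    {c : X} {v : ℝ} (hv : ∀ x, b - A x ∈ K → ⟪c, x⟫ ≤ v) {x₀ : X} (hx₀ : b - A x₀ ∈ K)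
    {x : X} {t : ℝ} (ht : 0 ≤ t) (hxt : A x + t • b ∈ K) : 0 ≤ ⟪c, x⟫ + t * v := by
  -- the points `(x₀ - s • x) / (1 + s t)`, `s ≥ 0`, are feasible
  have hray : ∀ s : ℝ, 0 ≤ s → ⟪c, x₀⟫ - v ≤ s * (⟪c, x⟫ + t * v) := by
    intro s hs
    have hpos : 0 < 1 + s * t := by positivity
    have hfeas : b - A ((1 + s * t)⁻¹ • (x₀ - s • x)) ∈ K := by
      have heq : b - A ((1 + s * t)⁻¹ • (x₀ - s • x)) =
          (1 + s * t)⁻¹ • ((b - A x₀) + s • (A x + t • b)) := by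
        rw [map_smul, map_sub, map_smul]
        match_scalars <;> field_simp
      rw [heq]
      exact K.smul_mem (add_mem hx₀ (K.smul_mem hxt hs)) (inv_nonneg.2 hpos.le)
    have hle := hv _ hfeas
    rw [real_inner_smul_right, inner_sub_right, real_inner_smul_right,
      inv_mul_le_iff₀ hpos] at hle
    linarith
  by_contra! h
  have hs := hray ((|⟪c, x₀⟫ - v| + 1) / -(⟪c, x⟫ + t * v))
    (div_nonneg (by positivity) (by linarith))
  rw [div_mul_eq_mul_div, mul_div_assoc, div_neg, div_self h.ne, mul_neg_one] at hs
  linarith [neg_abs_le (⟪c, x₀⟫ - v)]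

end ConicFeasibility

section Duality

variable {X Y : Type*}
  [NormedAddCommGroup X] [InnerProductSpace ℝ X] [FiniteDimensional ℝ X]
  [NormedAddCommGroup Y] [InnerProductSpace ℝ Y] [FiniteDimensional ℝ Y]
  (A : X →ₗ[ℝ] Y) (b : Y)

theorem adjoint_inner_le_of_mem_dualConeSet {K : Set Y} {y : Y} (hy : y ∈ dualConeSet K)
    {x : X} (hx : b - A x ∈ K) : ⟪LinearMap.adjoint A y, x⟫ ≤ ⟪b, y⟫ := by
  rw [LinearMap.adjoint_inner_left, real_inner_comm y b]
  simpa [inner_sub_right] using hy _ hx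

def dualEpigraph (K : Set Y) : Set (X × ℝ) :=
  {p | ∃ y ∈ dualConeSet K, LinearMap.adjoint A y = p.1 ∧ ⟪b, y⟫ ≤ p.2}

open Filter Topology in
theorem isClosed_dualEpigraph {K : Set Y}
    (hclosed : IsClosed {p : X × ℝ | ∃ y ∈ dualConeSet K,
      p = (LinearMap.adjoint A y, ⟪b, y⟫)})
    {x₀ : X} (hx₀ : b - A x₀ ∈ K) : IsClosed (dualEpigraph A b K) := by
  refine isClosed_of_closure_subset fun p hp => ?_
  obtain ⟨q, hq, hqp⟩ := mem_closure_iff_seq_limit.1 hp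
  choose y hy hy₁ hy₂ using hq
  have hfst : Tendsto (fun n => (q n).1) atTop (𝓝 p.1) := (continuous_fst.tendsto _).comp hqp
  have hsnd : Tendsto (fun n => (q n).2) atTop (𝓝 p.2) := (continuous_snd.tendsto _).comp hqp
  obtain ⟨M, hM⟩ := hsnd.bddAbove_range
  obtain ⟨m, hm⟩ : BddBelow (Set.range fun n => ⟪(q n).1, x₀⟫) :=
    (hfst.inner tendsto_const_nhds).bddBelow_range
  -- weak duality bounds the dual values from below along the sequence
  have hbounds : ∀ n, ⟪b, y n⟫ ∈ Set.Icc m M := by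
    intro n
    have hweak := adjoint_inner_le_of_mem_dualConeSet A b (hy n) hx₀
    rw [hy₁ n] at hweak
    exact ⟨(hm ⟨n, rfl⟩).trans hweak, (hy₂ n).trans (hM ⟨n, rfl⟩)⟩
  obtain ⟨r, -, φ, hφ, hr⟩ := isCompact_Icc.tendsto_subseq hbounds
  have hlim : Tendsto (fun n => (LinearMap.adjoint A (y (φ n)), ⟪b, y (φ n)⟫)) atTop
      (𝓝 (p.1, r)) := by
    simp only [hy₁]
    exact (hfst.comp hφ.tendsto_atTop).prodMk_nhds hr
  obtain ⟨z, hz, hpr⟩ :=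
    hclosed.mem_of_tendsto hlim (Eventually.of_forall fun n => ⟨_, hy (φ n), rfl⟩)
  obtain ⟨hz₁, hz₂⟩ := Prod.ext_iff.1 hpr
  refine ⟨z, hz, hz₁.symm, ?_⟩
  rw [← show r = ⟪b, z⟫ from hz₂]
  exact le_of_tendsto_of_tendsto' hr (hsnd.comp hφ.tendsto_atTop) fun n => hy₂ (φ n)

def dualEpigraphCone {K : Set Y}
    (hclosed : IsClosed {p : X × ℝ | ∃ y ∈ dualConeSet K,
      p = (LinearMap.adjoint A y, ⟪b, y⟫)})
    {x₀ : X} (hx₀ : b - A x₀ ∈ K) : ProperCone ℝ (X × ℝ) where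
  carrier := dualEpigraph A b K
  add_mem' := by
    rintro p q ⟨y, hy, hy₁, hy₂⟩ ⟨z, hz, hz₁, hz₂⟩
    refine ⟨y + z, ?_, by simp [hy₁, hz₁], by simpa [inner_add_right] using add_le_add hy₂ hz₂⟩
    rw [dualConeSet_eq_innerDual] at *
    exact add_mem hy hz
  zero_mem' := ⟨0, by simp [dualConeSet], by simp, by simp⟩
  smul_mem' := by
    rintro t p ⟨y, hy, hy₁, hy₂⟩
    refine ⟨(t : ℝ) • y, ?_, by simp [hy₁], ?_⟩
    · rw [dualConeSet_eq_innerDual] at *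
      exact ProperCone.smul_mem _ hy t.2
    · show ⟪b, (t : ℝ) • y⟫ ≤ (t : ℝ) * p.2
      rw [real_inner_smul_right]
      exact mul_le_mul_of_nonneg_left hy₂ t.2
  isClosed' := isClosed_dualEpigraph A b hclosed hx₀

theorem nonneg_apply_of_nonneg_on_dualEpigraph (K : ProperCone ℝ Y) {c : X} {v : ℝ}
    (hv : ∀ x, b - A x ∈ K → ⟪c, x⟫ ≤ v) {x₀ : X} (hx₀ : b - A x₀ ∈ K)
    (f : StrongDual ℝ (X × ℝ)) (hf : ∀ p ∈ dualEpigraph A b K, 0 ≤ f p) : 0 ≤ f (c, v) := by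
  set x := (InnerProductSpace.toDual ℝ X).symm (f.comp (.inl ℝ X ℝ))
  set t := f (0, 1)
  have hf_eq : ∀ p : X × ℝ, f p = ⟪x, p.1⟫ + t * p.2 := by
    intro p
    have hp : p = (p.1, 0) + p.2 • ((0 : X), (1 : ℝ)) := by ext <;> simp
    conv_lhs => rw [hp, map_add, map_smul]
    simp [x, t, mul_comm]
  have ht : 0 ≤ t := hf _ ⟨0, by simp [dualConeSet], by simp, by simp⟩
  have hxt : A x + t • b ∈ K := by
    rw [mem_iff_forall_mem_dualConeSet_inner_nonneg]
    intro y hy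
    simpa [hf_eq, inner_add_left, real_inner_smul_right, LinearMap.adjoint_inner_right,
      real_inner_comm] using hf (LinearMap.adjoint A y, ⟪b, y⟫) ⟨y, hy, rfl, le_rfl⟩
  rw [hf_eq, real_inner_comm]
  exact inner_add_mul_nonneg_of_add_smul_mem A b K hv hx₀ ht hxt

end Duality

/-- if the set `{(A*y, ⟨b,y⟩) : y ∈ K*} ⊆ X × ℝ` is closed, then `P` is
well-behaved. -/
theorem wellBehaved_of_closed
    {X Y : Type*}
    [NormedAddCommGroup X] [InnerProductSpace ℝ X] [FiniteDimensional ℝ X]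
    [NormedAddCommGroup Y] [InnerProductSpace ℝ Y] [FiniteDimensional ℝ Y]
    (A : X →ₗ[ℝ] Y) (b : Y) (K : Set Y)
    (hKclosed : IsClosed K) (hKconv : Convex ℝ K)
    (hKcone : ∀ (t : ℝ), 0 ≤ t → ∀ x ∈ K, t • x ∈ K)
    (hP : ∃ x : X, b - A x ∈ K)
    (hclosed : IsClosed {p : X × ℝ | ∃ y ∈ dualConeSet K,
      p = (LinearMap.adjoint A y, ⟪b, y⟫)}) :
    WellBehavedSystem A b K := by
  intro c v hv
  obtain ⟨x₀, hx₀⟩ := hP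
  have hv_ub : ∀ x, b - A x ∈ K → ⟪c, x⟫ ≤ v := fun x hx => hv.1 ⟨x, hx, rfl⟩
  have hcv : (c, v) ∈ dualEpigraphCone A b hclosed hx₀ := by
    by_contra h
    obtain ⟨f, hf, hfcv⟩ := ProperCone.hyperplane_separation_point _ h
    exact hfcv.not_ge <| nonneg_apply_of_nonneg_on_dualEpigraph A b
      (.ofIsClosedConvex hKclosed hKconv hKcone ⟨_, hx₀⟩) hv_ub hx₀ f hf
  obtain ⟨y, hy, hyc, hyv⟩ := hcv
  refine ⟨y, hy, hyc, hyv.antisymm (hv.2 ?_)⟩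
  rintro _ ⟨x, hx, rfl⟩
  rw [← show LinearMap.adjoint A y = c from hyc]
  exact adjoint_inner_le_of_mem_dualConeSet A b hy hx
end
end

section
/- Let Z = I_r ⊕ 0 ∈ S^n₊. For every V ∈ cl dir(Z, S^n₊) \ dir(Z, S^n₊) there exists an invertible n×n matrix T = Q ⊕ P, with Q an r×r orthogonal matrix and P an (n−r)×(n−r) invertible matrix, such that Tᵀ V T, partitioned with block sizes r, 1, n−r−1, has the form [[V₁₁, e₁, V₁₃], [e₁ᵀ, 0, 0], [V₁₃ᵀ, 0, V₃₃]], where V₁₁ is an r×r symmetric matrix, e₁ ∈ ℝ^r is the first standard unit vector, V₃₃ is positive semidefinite (possibly an empty matrix), and V₁₃ is arbitrary. -/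
/-!
For an orthogonal projection `Z`, split `x = a + b` with `a = Z x` and `b = (1 - Z) x`. Then
`xᵀ (Z + εV) x = ‖a‖² + ε (aᵀVa + 2 aᵀVb + bᵀVb)`. Being symmetric and positive semidefinite
on `ker Z` are closed conditions satisfied on `dir(Z, S^n₊)`, hence on its closure. Conversely,
if moreover every `b ∈ ker Z` with `bᵀVb = 0` has `Vb = 0`, then `‖Vb‖² ≤ C bᵀVb` on `ker Z`
(factor `V (1 - Z)` through a square root of the compression `(1 - Z) V (1 - Z)`), and for small
`ε` the cross term is absorbed by `‖a‖²` and `ε bᵀVb`, so `V ∈ dir(Z, S^n₊)`.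

So a `V` in the closure but not in `dir` has `b ∈ ker Z` with `bᵀVb = 0` and `w = Vb ≠ 0`, and
positivity of the compression forces `w ∈ range Z`. Rescale so that `‖w‖ = 1`. Then
`T = H₁ H₂ D` works: `H₁` is the Householder reflection of `range Z` taking `w` to `e₁`, `H₂`
the one of `ker Z` taking `e_{r+1}` to `b / ‖b‖`, and `D` multiplies `ker Z` by `‖b‖`. Indeed
`T e_{r+1} = b` and `Tᵀ w = e₁`, so the `(r+1)`-st column of `Tᵀ V T` is `Tᵀ V b = e₁`; the
rest of the normal form holds because `T` commutes with `Z` and `Tᵀ V T` is symmetric.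
-/

open Matrix

noncomputable section

/-- The set of feasible directions at `Z` in a set `C` of matrices. -/
def dirMat {n : ℕ} (Z : Matrix (Fin n) (Fin n) ℝ)
    (C : Set (Matrix (Fin n) (Fin n) ℝ)) : Set (Matrix (Fin n) (Fin n) ℝ) :=
  {V | ∃ ε : ℝ, 0 < ε ∧ Z + ε • V ∈ C}

/-- The cone of positive semidefinite `n × n` real matrices. -/
def PSDCone (n : ℕ) : Set (Matrix (Fin n) (Fin n) ℝ) := {M | M.PosSemidef}

/-- The block matrix `I_r ⊕ 0` of size `n × n`. -/
def ZMat (n r : ℕ) : Matrix (Fin n) (Fin n) ℝ :=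
  fun i j => if i = j ∧ (i : ℕ) < r then 1 else 0

/-- `T = Q ⊕ P` is block diagonal with block sizes `r` and `n - r`, the upper-left block `Q`
is orthogonal, and `T` is invertible (hence `P` is invertible). -/
def BlockRotation {n : ℕ} (r : ℕ) (T : Matrix (Fin n) (Fin n) ℝ) : Prop :=
  IsUnit T.det ∧
  (∀ i j : Fin n, (((i : ℕ) < r ∧ r ≤ (j : ℕ)) ∨ ((j : ℕ) < r ∧ r ≤ (i : ℕ))) → T i j = 0) ∧
  (∀ j k : Fin n, (j : ℕ) < r → (k : ℕ) < r →
    (∑ i, T i j * T i k) = if j = k then 1 else 0)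

/-- `V` has the form `[[V₁₁, e₁, *], [e₁ᵀ, 0, 0], [*, 0, V₃₃]]` (block sizes `r`, `1`,
`n - r - 1`) with `V₃₃` positive semidefinite. -/
def VForm {n : ℕ} (r : ℕ) (V : Matrix (Fin n) (Fin n) ℝ) : Prop :=
  V.IsSymm ∧
  (∀ i j : Fin n, (i : ℕ) < r → (j : ℕ) = r → V i j = if (i : ℕ) = 0 then 1 else 0) ∧
  (∀ i j : Fin n, (i : ℕ) = r → r ≤ (j : ℕ) → V i j = 0) ∧
  (∀ x : Fin n → ℝ, (∀ i : Fin n, (i : ℕ) ≤ r → x i = 0) → 0 ≤ x ⬝ᵥ (V *ᵥ x))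


namespace Matrix

theorem exists_mul_eq_of_ker_le {K m n p : Type*} [Field K] [Fintype m] [Fintype n]
    {B : Matrix m n K} {N : Matrix p n K} (h : ∀ x, B *ᵥ x = 0 → N *ᵥ x = 0) :
    ∃ M : Matrix p m K, N = M * B := by
  classical
  obtain ⟨g, hg⟩ := LinearMap.exists_extend
    ((LinearMap.ker B.mulVecLin).liftQ N.mulVecLin (fun x hx => by
      rw [LinearMap.mem_ker, mulVecLin_apply] at hx ⊢; exact h x hx) ∘ₗ
      B.mulVecLin.quotKerEquivRange.symm.toLinearMap)
  refine ⟨LinearMap.toMatrix' g, Matrix.toLin'.injective (LinearMap.ext fun x => ?_)⟩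
  have := LinearMap.congr_fun hg ⟨B.mulVecLin x, LinearMap.mem_range_self _ x⟩
  rw [LinearMap.comp_apply, LinearMap.comp_apply, LinearEquiv.coe_coe,
    LinearMap.quotKerEquivRange_symm_apply_image, Submodule.mkQ_apply, Submodule.liftQ_apply,
    Submodule.subtype_apply] at this
  rw [Matrix.toLin'_mul, Matrix.toLin'_toMatrix', LinearMap.comp_apply, Matrix.toLin'_apply,
    Matrix.toLin'_apply]
  exact this.symm

theorem exists_dotProduct_mulVec_self_le {m n : Type*} [Fintype m] [Fintype n]
    (M : Matrix m n ℝ) : ∃ C, 0 ≤ C ∧ ∀ x, M *ᵥ x ⬝ᵥ M *ᵥ x ≤ C * (x ⬝ᵥ x) := by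
  refine ⟨∑ i, ∑ j, M i j ^ 2, by positivity, fun x => ?_⟩
  calc M *ᵥ x ⬝ᵥ M *ᵥ x = ∑ i, (∑ j, M i j * x j) ^ 2 := by simp only [dotProduct, mulVec, sq]
    _ ≤ ∑ i, (∑ j, M i j ^ 2) * ∑ j, x j ^ 2 :=
      Finset.sum_le_sum fun i _ => Finset.sum_mul_sq_le_sq_mul_sq _ _ _
    _ = _ := by simp only [dotProduct, Finset.sum_mul, sq]

open scoped MatrixOrder in
theorem PosSemidef.exists_dotProduct_mulVec_self_le {n p : Type*} [Fintype n] [Fintype p]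
    {W : Matrix n n ℝ} (hW : W.PosSemidef) {N : Matrix p n ℝ}
    (h : ∀ x, W *ᵥ x = 0 → N *ᵥ x = 0) :
    ∃ C, 0 ≤ C ∧ ∀ x, N *ᵥ x ⬝ᵥ N *ᵥ x ≤ C * (x ⬝ᵥ W *ᵥ x) := by
  classical
  obtain ⟨B, rfl⟩ := CStarAlgebra.nonneg_iff_eq_star_mul_self.mp hW.nonneg
  have hquad : ∀ x, x ⬝ᵥ (star B * B) *ᵥ x = B *ᵥ x ⬝ᵥ B *ᵥ x := fun x => by
    rw [← mulVec_mulVec, dotProduct_mulVec, star_eq_conjTranspose,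
      conjTranspose_eq_transpose_of_trivial, vecMul_transpose]
  obtain ⟨M, rfl⟩ := exists_mul_eq_of_ker_le (B := B) (N := N) fun x hx =>
    h x (by rw [← mulVec_mulVec, hx, mulVec_zero])
  obtain ⟨C, hC, hMC⟩ := Matrix.exists_dotProduct_mulVec_self_le M
  exact ⟨C, hC, fun x => by rw [hquad, ← mulVec_mulVec]; exact hMC _⟩

variable {ι : Type*} [Fintype ι] {V : Matrix ι ι ℝ}

theorem IsSymm.vecMul_eq_mulVec (hV : V.IsSymm) (x : ι → ℝ) : x ᵥ* V = V *ᵥ x := by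
  rw [← vecMul_transpose, hV.eq]

theorem IsSymm.dotProduct_mulVec_comm (hV : V.IsSymm) (x y : ι → ℝ) :
    x ⬝ᵥ V *ᵥ y = y ⬝ᵥ V *ᵥ x := by
  rw [dotProduct_mulVec, hV.vecMul_eq_mulVec, dotProduct_comm]

theorem dotProduct_transpose_mul_mul_mulVec (A V : Matrix ι ι ℝ) (x : ι → ℝ) :
    x ⬝ᵥ (Aᵀ * V * A) *ᵥ x = A *ᵥ x ⬝ᵥ V *ᵥ (A *ᵥ x) := by
  rw [← mulVec_mulVec, ← mulVec_mulVec, dotProduct_mulVec, vecMul_transpose]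

theorem IsSymm.transpose_mul_mul (A : Matrix ι ι ℝ) (hV : V.IsSymm) :
    (Aᵀ * V * A).IsSymm := by
  rw [IsSymm, transpose_mul, transpose_mul, transpose_transpose, hV.eq, Matrix.mul_assoc]

end Matrix

section Projection

variable {ι : Type*} [Fintype ι] {Z V : Matrix ι ι ℝ}

theorem dotProduct_eq_zero_of_mulVec_eq_self_of_mulVec_eq_zero (hZ : Z.IsSymm) {x y : ι → ℝ}
    (hx : Z *ᵥ x = x) (hy : Z *ᵥ y = 0) : x ⬝ᵥ y = 0 := by
  rw [← hx, dotProduct_comm, hZ.dotProduct_mulVec_comm, hy, dotProduct_zero]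

theorem dotProduct_self_add_mul_dotProduct_mulVec_nonneg (hV : V.IsSymm) {a b : ι → ℝ} {ε K C : ℝ}
    (hε : 0 < ε) (hK : 0 ≤ K) (hC : 0 ≤ C) (hεKC : ε * (1 + K + 2 * C) = 1)
    (ha : V *ᵥ a ⬝ᵥ V *ᵥ a ≤ K * (a ⬝ᵥ a)) (hb : V *ᵥ b ⬝ᵥ V *ᵥ b ≤ C * (b ⬝ᵥ V *ᵥ b))
    (hq : 0 ≤ b ⬝ᵥ V *ᵥ b) : 0 ≤ a ⬝ᵥ a + ε * ((a + b) ⬝ᵥ V *ᵥ (a + b)) := by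
  have hVab : (a + b) ⬝ᵥ V *ᵥ (a + b) = a ⬝ᵥ V *ᵥ a + 2 * (a ⬝ᵥ V *ᵥ b) + b ⬝ᵥ V *ᵥ b := by
    rw [mulVec_add, dotProduct_add, add_dotProduct, add_dotProduct,
      hV.dotProduct_mulVec_comm b a]
    ring
  have haa : 0 ≤ a ⬝ᵥ a := dotProduct_self_star_nonneg a
  -- AM-GM, in the form `0 ≤ ‖a + V a‖²` and `0 ≤ ‖a + 2ε V b‖²`
  have hAa : 0 ≤ (a + V *ᵥ a) ⬝ᵥ (a + V *ᵥ a) := dotProduct_self_star_nonneg _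
  have hAb : 0 ≤ (a + (2 * ε) • V *ᵥ b) ⬝ᵥ (a + (2 * ε) • V *ᵥ b) :=
    dotProduct_self_star_nonneg _
  simp only [dotProduct_add, add_dotProduct, dotProduct_smul, smul_dotProduct, smul_eq_mul,
    dotProduct_comm (V *ᵥ a) a, dotProduct_comm (V *ᵥ b) a] at hAa hAb
  have hεa : ε * (1 + K + 2 * C) * (a ⬝ᵥ a) = a ⬝ᵥ a := by rw [hεKC, one_mul]
  have hεq : ε * (1 + K + 2 * C) * (ε * b ⬝ᵥ V *ᵥ b) = ε * b ⬝ᵥ V *ᵥ b := by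
    rw [hεKC, one_mul]
  rw [hVab]
  linarith [mul_nonneg hε.le hAa, mul_le_mul_of_nonneg_left ha hε.le,
    mul_le_mul_of_nonneg_left hb (sq_nonneg ε), mul_nonneg (mul_nonneg hε.le hC) haa,
    mul_nonneg (mul_nonneg (mul_nonneg hε.le hε.le) hq) (by positivity : (0 : ℝ) ≤ 1 + K)]

theorem dotProduct_inv_sqrt_smul_self {x : ι → ℝ} (hx : x ≠ 0) :
    (√(x ⬝ᵥ x))⁻¹ • x ⬝ᵥ (√(x ⬝ᵥ x))⁻¹ • x = 1 := by
  have hxx : 0 < x ⬝ᵥ x :=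
    (dotProduct_self_star_nonneg x).lt_of_ne' (mt dotProduct_self_eq_zero.mp hx)
  rw [smul_dotProduct, dotProduct_smul, smul_eq_mul, smul_eq_mul, ← mul_assoc, ← mul_inv,
    Real.mul_self_sqrt hxx.le, inv_mul_cancel₀ hxx.ne']

variable [DecidableEq ι]

theorem dotProduct_one_sub_mul_mul_mulVec (hZ : Z.IsSymm) (x : ι → ℝ) :
    x ⬝ᵥ ((1 - Z) * V * (1 - Z)) *ᵥ x = (1 - Z) *ᵥ x ⬝ᵥ V *ᵥ ((1 - Z) *ᵥ x) := by
  have hP : (1 - Z)ᵀ = 1 - Z := isSymm_one.sub hZ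
  rw [← dotProduct_transpose_mul_mul_mulVec, hP]

theorem posSemidef_one_sub_mul_mul (hZ : Z.IsSymm) (hZZ : IsIdempotentElem Z) (hV : V.IsSymm)
    (hnn : ∀ x, Z *ᵥ x = 0 → 0 ≤ x ⬝ᵥ V *ᵥ x) : ((1 - Z) * V * (1 - Z)).PosSemidef := by
  refine PosSemidef.of_dotProduct_mulVec_nonneg ?_ fun x => ?_
  · have hP : (1 - Z)ᵀ = 1 - Z := isSymm_one.sub hZ
    have h := hV.transpose_mul_mul (1 - Z)
    rwa [hP, ← isHermitian_iff_isSymm] at h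
  · rw [star_trivial, dotProduct_one_sub_mul_mul_mulVec hZ]
    exact hnn _ (by rw [mulVec_mulVec, hZZ.mul_one_sub_self, zero_mulVec])

theorem mulVec_mulVec_eq_self_of_isotropic (hZ : Z.IsSymm) (hZZ : IsIdempotentElem Z)
    (hV : V.IsSymm) (hnn : ∀ x, Z *ᵥ x = 0 → 0 ≤ x ⬝ᵥ V *ᵥ x) {b : ι → ℝ}
    (hZb : Z *ᵥ b = 0) (hb : b ⬝ᵥ V *ᵥ b = 0) : Z *ᵥ (V *ᵥ b) = V *ᵥ b := by
  have hPb : (1 - Z) *ᵥ b = b := by rw [sub_mulVec, one_mulVec, hZb, sub_zero]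
  have hW := (posSemidef_one_sub_mul_mul hZ hZZ hV hnn).dotProduct_mulVec_zero_iff b
  rw [star_trivial, dotProduct_one_sub_mul_mul_mulVec hZ, hPb] at hW
  have h := hW.mp hb
  rw [← mulVec_mulVec, hPb, ← mulVec_mulVec, sub_mulVec, one_mulVec, sub_eq_zero] at h
  exact h.symm

theorem exists_dotProduct_mulVec_self_le_of_isotropic (hZ : Z.IsSymm) (hZZ : IsIdempotentElem Z)
    (hV : V.IsSymm) (hnn : ∀ x, Z *ᵥ x = 0 → 0 ≤ x ⬝ᵥ V *ᵥ x)
    (hker : ∀ x, Z *ᵥ x = 0 → x ⬝ᵥ V *ᵥ x = 0 → V *ᵥ x = 0) :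
    ∃ C, 0 ≤ C ∧ ∀ b, Z *ᵥ b = 0 → V *ᵥ b ⬝ᵥ V *ᵥ b ≤ C * (b ⬝ᵥ V *ᵥ b) := by
  have hZP : ∀ x, Z *ᵥ ((1 - Z) *ᵥ x) = 0 := fun x => by
    rw [mulVec_mulVec, hZZ.mul_one_sub_self, zero_mulVec]
  obtain ⟨C, hC, hbound⟩ :=
    (posSemidef_one_sub_mul_mul hZ hZZ hV hnn).exists_dotProduct_mulVec_self_le
      (N := V * (1 - Z)) fun x hx => by
        rw [← mulVec_mulVec]
        refine hker _ (hZP x) ?_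
        rw [← dotProduct_one_sub_mul_mul_mulVec hZ, hx, dotProduct_zero]
  refine ⟨C, hC, fun b hb => ?_⟩
  have hPb : (1 - Z) *ᵥ b = b := by rw [sub_mulVec, one_mulVec, hb, sub_zero]
  have h := hbound b
  rwa [← mulVec_mulVec, dotProduct_one_sub_mul_mul_mulVec hZ, hPb] at h

end Projection

section FeasibleDirections

variable {n : ℕ} {Z V : Matrix (Fin n) (Fin n) ℝ}

theorem closure_dirMat_psdCone_subset (hZ : Z.IsSymm) :
    closure (dirMat Z (PSDCone n)) ⊆ {V | V.IsSymm ∧ ∀ x, Z *ᵥ x = 0 → 0 ≤ x ⬝ᵥ V *ᵥ x} := by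
  refine closure_minimal (fun V ⟨ε, hε, hpsd⟩ => ⟨?_, fun x hx => ?_⟩) ?_
  · have hsymm : (Z + ε • V).IsSymm := isHermitian_iff_isSymm.mp hpsd.1
    have hV : V = ε⁻¹ • (Z + ε • V - Z) := by
      rw [add_sub_cancel_left, smul_smul, inv_mul_cancel₀ hε.ne', one_smul]
    rw [hV]
    exact (hsymm.sub hZ).smul _
  · have h := hpsd.dotProduct_mulVec_nonneg x
    rw [star_trivial, add_mulVec, hx, zero_add, smul_mulVec, dotProduct_smul, smul_eq_mul] at h
    exact (mul_nonneg_iff_of_pos_left hε).mp h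
  · rw [Set.ofPred_and, Set.ofPred_forall]
    refine (isClosed_eq continuous_id.matrix_transpose continuous_id).inter
      (isClosed_iInter fun x => ?_)
    simp only [Set.ofPred_forall]
    exact isClosed_iInter fun _ => isClosed_le continuous_const
      (continuous_const.dotProduct (continuous_id.matrix_mulVec continuous_const))

theorem mem_dirMat_psdCone (hZ : Z.IsSymm) (hZZ : IsIdempotentElem Z) (hV : V.IsSymm)
    (hnn : ∀ x, Z *ᵥ x = 0 → 0 ≤ x ⬝ᵥ V *ᵥ x)
    (hker : ∀ x, Z *ᵥ x = 0 → x ⬝ᵥ V *ᵥ x = 0 → V *ᵥ x = 0) :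
    V ∈ dirMat Z (PSDCone n) := by
  obtain ⟨C, hC, hVb⟩ := exists_dotProduct_mulVec_self_le_of_isotropic hZ hZZ hV hnn hker
  obtain ⟨K, hK, hVa⟩ := Matrix.exists_dotProduct_mulVec_self_le V
  have hε : 0 < (1 + K + 2 * C)⁻¹ := by positivity
  refine ⟨_, hε, PosSemidef.of_dotProduct_mulVec_nonneg
    (isHermitian_iff_isSymm.mpr (hZ.add (hV.smul _))) fun x => ?_⟩
  have hZb : Z *ᵥ ((1 - Z) *ᵥ x) = 0 := by
    rw [mulVec_mulVec, hZZ.mul_one_sub_self, zero_mulVec]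
  have hx : Z *ᵥ x + (1 - Z) *ᵥ x = x := by rw [sub_mulVec, one_mulVec, add_sub_cancel]
  have hVx : x ⬝ᵥ V *ᵥ x = (Z *ᵥ x + (1 - Z) *ᵥ x) ⬝ᵥ V *ᵥ (Z *ᵥ x + (1 - Z) *ᵥ x) := by
    rw [hx]
  have hZx : x ⬝ᵥ Z *ᵥ x = Z *ᵥ x ⬝ᵥ Z *ᵥ x := by
    have h := dotProduct_transpose_mul_mul_mulVec Z 1 x
    rwa [hZ.eq, Matrix.mul_one, hZZ.eq, one_mulVec] at h
  rw [star_trivial, add_mulVec, dotProduct_add, hZx, smul_mulVec, dotProduct_smul, smul_eq_mul,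
    hVx]
  exact dotProduct_self_add_mul_dotProduct_mulVec_nonneg hV hε hK hC
    (inv_mul_cancel₀ (by positivity)) (hVa _) (hVb _ hZb) (hnn _ hZb)

end FeasibleDirections

section Householder

variable {ι : Type*} [Fintype ι] [DecidableEq ι]

def householder (v : ι → ℝ) : Matrix ι ι ℝ := 1 - (2 / (v ⬝ᵥ v)) • vecMulVec v v

theorem householder_transpose (v : ι → ℝ) : (householder v)ᵀ = householder v := by
  rw [householder, transpose_sub, transpose_one, transpose_smul, transpose_vecMulVec]

theorem householder_mulVec (v y : ι → ℝ) :
    householder v *ᵥ y = y - (2 / (v ⬝ᵥ v) * (v ⬝ᵥ y)) • v := by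
  rw [householder, sub_mulVec, one_mulVec, smul_mulVec, vecMulVec_mulVec, op_smul_eq_smul,
    smul_smul]

theorem householder_mulVec_of_dotProduct_eq_zero {v y : ι → ℝ} (h : v ⬝ᵥ y = 0) :
    householder v *ᵥ y = y := by
  rw [householder_mulVec, h, mul_zero, zero_smul, sub_zero]

theorem householder_sub_mulVec {x y : ι → ℝ} (h : x ⬝ᵥ x = y ⬝ᵥ y) :
    householder (x - y) *ᵥ x = y := by
  rw [householder_mulVec]
  by_cases hxy : x - y = 0
  · rw [hxy, smul_zero, sub_zero]
    exact sub_eq_zero.mp hxy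
  · have hvv : (x - y) ⬝ᵥ (x - y) = 2 * ((x - y) ⬝ᵥ x) := by
      simp only [sub_dotProduct, dotProduct_sub, h, dotProduct_comm y x]
      ring
    have hc : (x - y) ⬝ᵥ x ≠ 0 := fun hc =>
      hxy (dotProduct_self_eq_zero.mp (by rw [hvv, hc, mul_zero]))
    have h1 : 2 / (2 * ((x - y) ⬝ᵥ x)) * ((x - y) ⬝ᵥ x) = 1 := by field_simp
    rw [hvv, h1, one_smul, sub_sub_cancel]

theorem householder_mul_self (v : ι → ℝ) : householder v * householder v = 1 := by
  have hc : 2 / (v ⬝ᵥ v) * (2 / (v ⬝ᵥ v)) * (v ⬝ᵥ v) = 2 * (2 / (v ⬝ᵥ v)) := by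
    rcases eq_or_ne (v ⬝ᵥ v) 0 with h | h
    · simp [h]
    · field_simp
  simp only [householder, sub_mul, mul_sub, one_mul, mul_one, smul_mul_smul_comm,
    vecMulVec_mul_vecMulVec, vecMulVec_smul]
  rw [smul_smul, hc]
  module

end Householder

section Construction

variable {ι : Type*} [DecidableEq ι] {Z : Matrix ι ι ℝ}

def kerScaling (Z : Matrix ι ι ℝ) (s : ℝ) : Matrix ι ι ℝ := Z + s • (1 - Z)

theorem kerScaling_transpose (hZ : Z.IsSymm) (s : ℝ) : (kerScaling Z s)ᵀ = kerScaling Z s :=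
  (hZ.add ((isSymm_one.sub hZ).smul s)).eq

variable [Fintype ι]

theorem commute_householder (hZ : Z.IsSymm) {v : ι → ℝ} {t : ℝ} (hv : Z *ᵥ v = t • v) :
    Commute Z (householder v) := by
  have hA : Commute Z (vecMulVec v v) := by
    rw [Commute, SemiconjBy, mul_vecMulVec, vecMulVec_mul, hZ.vecMul_eq_mulVec, hv,
      smul_vecMulVec, vecMulVec_smul]
  exact (Commute.one_right Z).sub_right (hA.smul_right _)

theorem commute_kerScaling (Z : Matrix ι ι ℝ) (s : ℝ) : Commute Z (kerScaling Z s) :=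
  (Commute.refl Z).add_right (((Commute.one_right Z).sub_right (Commute.refl Z)).smul_right s)

theorem kerScaling_mulVec_of_mulVec_eq_self (s : ℝ) {x : ι → ℝ} (hx : Z *ᵥ x = x) :
    kerScaling Z s *ᵥ x = x := by
  rw [kerScaling, add_mulVec, smul_mulVec, sub_mulVec, one_mulVec, hx, sub_self, smul_zero,
    add_zero]

theorem kerScaling_mulVec_of_mulVec_eq_zero (s : ℝ) {x : ι → ℝ} (hx : Z *ᵥ x = 0) :
    kerScaling Z s *ᵥ x = s • x := by
  rw [kerScaling, add_mulVec, smul_mulVec, sub_mulVec, one_mulVec, hx, sub_zero, zero_add]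

theorem kerScaling_mul (hZZ : IsIdempotentElem Z) (s : ℝ) : kerScaling Z s * Z = Z := by
  rw [kerScaling, add_mul, Matrix.smul_mul, hZZ.one_sub_mul_self, smul_zero, add_zero, hZZ.eq]

theorem kerScaling_mul_kerScaling_inv (hZZ : IsIdempotentElem Z) {s : ℝ} (hs : s ≠ 0) :
    kerScaling Z s * kerScaling Z s⁻¹ = 1 := by
  simp only [kerScaling, add_mul, mul_add, Matrix.smul_mul, Matrix.mul_smul, smul_smul, hZZ.eq,
    hZZ.mul_one_sub_self, hZZ.one_sub_mul_self, hZZ.one_sub.eq, inv_mul_cancel₀ hs, smul_zero,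
    zero_add, add_zero, one_smul]
  abel

theorem exists_commute_mulVec_eq_and_transpose_mulVec_eq (hZ : Z.IsSymm)
    (hZZ : IsIdempotentElem Z) {z e u f : ι → ℝ} (hze : z ⬝ᵥ z = e ⬝ᵥ e) (hf : f ⬝ᵥ f = 1)
    (hu : u ≠ 0) (hZz : Z *ᵥ z = z) (hZe : Z *ᵥ e = e) (hZu : Z *ᵥ u = 0) (hZf : Z *ᵥ f = 0) :
    ∃ T : Matrix ι ι ℝ,
      Commute Z T ∧ IsUnit T.det ∧ Tᵀ * T * Z = Z ∧ T *ᵥ f = u ∧ Tᵀ *ᵥ z = e := by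
  set s := √(u ⬝ᵥ u)
  have hs : s ≠ 0 := Real.sqrt_ne_zero'.mpr
    ((dotProduct_self_star_nonneg u).lt_of_ne' (mt dotProduct_self_eq_zero.mp hu))
  set û := s⁻¹ • u
  have hZû : Z *ᵥ û = 0 := by rw [mulVec_smul, hZu, smul_zero]
  have hze' : Z *ᵥ (z - e) = (1 : ℝ) • (z - e) := by rw [mulVec_sub, hZz, hZe, one_smul]
  have hfû : Z *ᵥ (f - û) = (0 : ℝ) • (f - û) := by rw [mulVec_sub, hZf, hZû, sub_zero, zero_smul]
  refine ⟨householder (z - e) * householder (f - û) * kerScaling Z s,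
    ((commute_householder hZ hze').mul_right (commute_householder hZ hfû)).mul_right
      (commute_kerScaling Z s), ?_, ?_, ?_, ?_⟩
  · rw [det_mul, det_mul]
    exact ((isUnit_det_of_right_inverse (householder_mul_self _)).mul
      (isUnit_det_of_right_inverse (householder_mul_self _))).mul
      (isUnit_det_of_right_inverse (kerScaling_mul_kerScaling_inv hZZ hs))
  · simp only [transpose_mul, householder_transpose, kerScaling_transpose hZ, Matrix.mul_assoc]
    rw [← Matrix.mul_assoc (householder (z - e)), householder_mul_self, Matrix.one_mul,
      ← Matrix.mul_assoc (householder (f - û)), householder_mul_self, Matrix.one_mul,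
      kerScaling_mul hZZ, kerScaling_mul hZZ]
  · rw [← mulVec_mulVec, ← mulVec_mulVec, kerScaling_mulVec_of_mulVec_eq_zero s hZf, mulVec_smul,
      householder_sub_mulVec (hf.trans (dotProduct_inv_sqrt_smul_self hu).symm), smul_smul,
      mul_inv_cancel₀ hs, one_smul, householder_mulVec_of_dotProduct_eq_zero]
    exact dotProduct_eq_zero_of_mulVec_eq_self_of_mulVec_eq_zero hZ (by simpa using hze') hZu
  · rw [transpose_mul, transpose_mul, householder_transpose, householder_transpose,
      kerScaling_transpose hZ, ← mulVec_mulVec, ← mulVec_mulVec, householder_sub_mulVec hze,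
      householder_mulVec_of_dotProduct_eq_zero, kerScaling_mulVec_of_mulVec_eq_self s hZe]
    rw [dotProduct_comm]
    exact dotProduct_eq_zero_of_mulVec_eq_self_of_mulVec_eq_zero hZ hZe (by simpa using hfû)

end Construction

section Block

variable {n r : ℕ}

theorem ZMat_eq_diagonal (n r : ℕ) :
    ZMat n r = diagonal fun i : Fin n => if (i : ℕ) < r then 1 else 0 := by
  ext i j
  by_cases h : i = j
  · subst h; simp [ZMat]
  · simp [ZMat, h]

theorem ZMat_isSymm (n r : ℕ) : (ZMat n r).IsSymm := by
  rw [ZMat_eq_diagonal]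
  exact isSymm_diagonal _

theorem ZMat_isIdempotentElem (n r : ℕ) : IsIdempotentElem (ZMat n r) := by
  rw [IsIdempotentElem, ZMat_eq_diagonal, diagonal_mul_diagonal]
  congr 1
  ext i
  split_ifs <;> simp

theorem ZMat_mulVec_apply (x : Fin n → ℝ) (i : Fin n) :
    (ZMat n r *ᵥ x) i = if (i : ℕ) < r then x i else 0 := by
  rw [ZMat_eq_diagonal, mulVec_diagonal]
  split_ifs <;> simp

theorem ZMat_mulVec_eq_zero_iff {x : Fin n → ℝ} :
    ZMat n r *ᵥ x = 0 ↔ ∀ i : Fin n, (i : ℕ) < r → x i = 0 := by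
  simp [funext_iff, ZMat_mulVec_apply]

theorem ZMat_mulVec_single_of_lt {i : Fin n} (hi : (i : ℕ) < r) :
    ZMat n r *ᵥ Pi.single i 1 = Pi.single i 1 := by
  ext j
  rw [ZMat_mulVec_apply]
  split_ifs with hj
  · rfl
  · have hji : j ≠ i := fun h => hj (h ▸ hi)
    simp [hji]

theorem ZMat_mulVec_single_of_le {i : Fin n} (hi : r ≤ (i : ℕ)) :
    ZMat n r *ᵥ Pi.single i 1 = 0 :=
  ZMat_mulVec_eq_zero_iff.mpr fun j hj => Pi.single_eq_of_ne (fun h => by omega) _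

theorem pos_of_ZMat_mulVec_eq_self {x : Fin n → ℝ} (hx : ZMat n r *ᵥ x = x) (hx0 : x ≠ 0) :
    0 < r := by
  obtain ⟨i, hi⟩ := Function.ne_iff.mp hx0
  rw [← hx, ZMat_mulVec_apply] at hi
  split_ifs at hi with h
  · omega
  · exact absurd rfl hi

theorem lt_of_ZMat_mulVec_eq_zero {x : Fin n → ℝ} (hx : ZMat n r *ᵥ x = 0) (hx0 : x ≠ 0) :
    r < n := by
  obtain ⟨i, hi⟩ := Function.ne_iff.mp hx0
  by_contra! h
  exact hi (ZMat_mulVec_eq_zero_iff.mp hx i (by omega))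

theorem Commute.ZMat_apply_eq_zero {T : Matrix (Fin n) (Fin n) ℝ} (hT : Commute (ZMat n r) T)
    {i j : Fin n} (hij : ((i : ℕ) < r ∧ r ≤ (j : ℕ)) ∨ ((j : ℕ) < r ∧ r ≤ (i : ℕ))) :
    T i j = 0 := by
  have h := congrFun (congrFun hT.eq i) j
  rw [ZMat_eq_diagonal, diagonal_mul, mul_diagonal] at h
  rcases hij with ⟨hi, hj⟩ | ⟨hj, hi⟩
  · simpa [hi, hj.not_gt] using h
  · simpa [hi.not_gt, hj] using h.symm

theorem blockRotation_of_commute {T : Matrix (Fin n) (Fin n) ℝ} (hT : Commute (ZMat n r) T)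
    (hdet : IsUnit T.det) (horth : Tᵀ * T * ZMat n r = ZMat n r) : BlockRotation r T := by
  refine ⟨hdet, fun i j hij => hT.ZMat_apply_eq_zero hij, fun j k hj hk => ?_⟩
  have h := congrFun (congrFun horth j) k
  rw [ZMat_eq_diagonal, mul_diagonal, if_pos hk, mul_one, ← ZMat_eq_diagonal, ZMat] at h
  simpa [mul_apply, hj] using h

theorem vForm_transpose_mul_mul {V T : Matrix (Fin n) (Fin n) ℝ} (hV : V.IsSymm)
    (hnn : ∀ x, ZMat n r *ᵥ x = 0 → 0 ≤ x ⬝ᵥ V *ᵥ x) (hT : Commute (ZMat n r) T)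
    (hr : 0 < r) (hrn : r < n)
    (hcol : (Tᵀ * V * T) *ᵥ Pi.single ⟨r, hrn⟩ 1 = Pi.single ⟨0, hr.trans hrn⟩ 1) :
    VForm r (Tᵀ * V * T) := by
  have hM : ∀ i : Fin n, (Tᵀ * V * T) i ⟨r, hrn⟩ = if (i : ℕ) = 0 then 1 else 0 := fun i => by
    have h := congrFun hcol i
    rw [mulVec_single_one, col_apply] at h
    simp [h, Pi.single_apply, Fin.ext_iff]
  refine ⟨hV.transpose_mul_mul T, fun i j _ hj => ?_, fun i j hi hj => ?_, fun x hx => ?_⟩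
  · obtain rfl : j = ⟨r, hrn⟩ := Fin.ext hj
    exact hM i
  · obtain rfl : i = ⟨r, hrn⟩ := Fin.ext hi
    rw [← IsSymm.ext_iff.mp (hV.transpose_mul_mul T), hM j, if_neg (by omega)]
  · rw [dotProduct_transpose_mul_mul_mulVec]
    refine hnn _ ?_
    rw [mulVec_mulVec, hT.eq, ← mulVec_mulVec,
      ZMat_mulVec_eq_zero_iff.mpr fun i hi => hx i hi.le, mulVec_zero]

theorem exists_blockRotation_vForm_of_isotropic {V : Matrix (Fin n) (Fin n) ℝ} (hV : V.IsSymm)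
    (hnn : ∀ x, ZMat n r *ᵥ x = 0 → 0 ≤ x ⬝ᵥ V *ᵥ x) {b : Fin n → ℝ}
    (hZb : ZMat n r *ᵥ b = 0) (hZVb : ZMat n r *ᵥ (V *ᵥ b) = V *ᵥ b) (hVb : V *ᵥ b ≠ 0) :
    ∃ T, BlockRotation r T ∧ VForm r (Tᵀ * V * T) := by
  have hb : b ≠ 0 := fun h => hVb (by rw [h, mulVec_zero])
  have hr : 0 < r := pos_of_ZMat_mulVec_eq_self hZVb hVb
  have hrn : r < n := lt_of_ZMat_mulVec_eq_zero hZb hb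
  set c := (√(V *ᵥ b ⬝ᵥ V *ᵥ b))⁻¹
  have hc : c ≠ 0 := inv_ne_zero (Real.sqrt_ne_zero'.mpr
    ((dotProduct_self_star_nonneg _).lt_of_ne' (mt dotProduct_self_eq_zero.mp hVb)))
  obtain ⟨T, hZT, hdet, horth, hTf, hTz⟩ :=
    exists_commute_mulVec_eq_and_transpose_mulVec_eq (ZMat_isSymm n r) (ZMat_isIdempotentElem n r)
      (z := c • V *ᵥ b) (e := Pi.single ⟨0, hr.trans hrn⟩ 1) (u := c • b)
      (f := Pi.single ⟨r, hrn⟩ 1) (by rw [dotProduct_inv_sqrt_smul_self hVb]; simp) (by simp)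
      (smul_ne_zero hc hb) (by rw [mulVec_smul, hZVb]) (ZMat_mulVec_single_of_lt hr)
      (by rw [mulVec_smul, hZb, smul_zero]) (ZMat_mulVec_single_of_le le_rfl)
  refine ⟨T, blockRotation_of_commute hZT hdet horth, vForm_transpose_mul_mul hV hnn hZT hr hrn ?_⟩
  rw [← mulVec_mulVec, ← mulVec_mulVec, hTf, mulVec_smul, hTz]

end Block

/-- for `Z = I_r ⊕ 0`, every
`V ∈ cl dir(Z, S^n₊) \ dir(Z, S^n₊)` can be brought, by a rotation `T = Q ⊕ P` with `Q`
orthogonal and `P` invertible, to the form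
`[[V₁₁, e₁, *], [e₁ᵀ, 0, 0], [*, 0, V₃₃]]` with `V₃₃ ⪰ 0`. -/
theorem frontier_dir_psd_normal_form {n r : ℕ}
    (V : Matrix (Fin n) (Fin n) ℝ)
    (hV : V ∈ closure (dirMat (ZMat n r) (PSDCone n)) \ dirMat (ZMat n r) (PSDCone n)) :
    ∃ T : Matrix (Fin n) (Fin n) ℝ, BlockRotation r T ∧ VForm r (Tᵀ * V * T) := by
  obtain ⟨hVsymm, hnn⟩ := closure_dirMat_psdCone_subset (ZMat_isSymm n r) hV.1
  obtain ⟨b, hZb, hb, hVb⟩ : ∃ b, ZMat n r *ᵥ b = 0 ∧ b ⬝ᵥ V *ᵥ b = 0 ∧ V *ᵥ b ≠ 0 := by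
    by_contra! h
    exact hV.2 (mem_dirMat_psdCone (ZMat_isSymm n r) (ZMat_isIdempotentElem n r) hVsymm hnn h)
  exact exists_blockRotation_vForm_of_isotropic hVsymm hnn hZb
    (mulVec_mulVec_eq_self_of_isotropic (ZMat_isSymm n r) (ZMat_isIdempotentElem n r) hVsymm hnn
      hZb hb) hVb
end
end
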